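/- arXiv:1907.02759 — 2 statements merged into one kernel-verified Lean document; each statement's English description precedes it below -/
import Mathlib

section
/- Let F : U ⊆ ℝⁿ → ℝᵐ be monotonic (F'(x) ≥ 0 entrywise) and convex (F(y) − F(x) ≥ F'(x)(y−x) entrywise) on a convex open set U containing [−1,3]ⁿ. Then for every j ∈ {1,…,n} and every x ∈ [0,1]ⁿ, setting z⁽ʲ⁾ := −eⱼ + 3eⱼ', one has F'(x)(eⱼ − eⱼ') ≥ (1/2) F'(z⁽ʲ⁾)(eⱼ − 3eⱼ') entrywise. -/
/-!
Convexity applied at `x` and at `z` in both directions makes the derivative monotone along the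
segment: `F'(z)(x - z) ≤ F(x) - F(z) ≤ F'(x)(x - z)`. Since both derivatives are entrywise
nonnegative, the entrywise bounds `eⱼ - 3eⱼ' ≤ x - z ≤ 2(eⱼ - eⱼ')` pass through them.
-/

open Matrix Set

variable {ι κ : Type*}

theorem Matrix.mulVec_mono_of_nonneg [Fintype ι] (A : Matrix κ ι ℝ) (hA : ∀ k i, 0 ≤ A k i)
    {u v : ι → ℝ} (huv : u ≤ v) : A *ᵥ u ≤ A *ᵥ v := fun k =>
  Finset.sum_le_sum fun i _ => mul_le_mul_of_nonneg_left (huv i) (hA k i)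

theorem mulVec_sub_le_of_gradient_ineq [Fintype ι] {U : Set (ι → ℝ)} (F : (ι → ℝ) → κ → ℝ)
    (F' : (ι → ℝ) → Matrix κ ι ℝ)
    (hconv : ∀ z ∈ U, ∀ w ∈ U, F' z *ᵥ (w - z) ≤ F w - F z)
    {x z : ι → ℝ} (hx : x ∈ U) (hz : z ∈ U) :
    F' z *ᵥ (x - z) ≤ F' x *ᵥ (x - z) := by
  intro k
  have hzx := hconv z hz x hx k
  have hxz := hconv x hx z hz k
  rw [← neg_sub x z, mulVec_neg] at hxz
  simp only [Pi.sub_apply, Pi.neg_apply] at hzx hxz ⊢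
  linarith

section UnitCube

variable [DecidableEq ι] {x : ι → ℝ} (j : ι)

theorem signed_unit_le_sub_corner (hx : x ∈ Icc 0 1) :
    (fun i => if i = j then 1 else -3) ≤ x - fun i => if i = j then -1 else 3 := by
  intro i
  have : 0 ≤ x i := hx.1 i
  simp only [Pi.sub_apply]
  split_ifs <;> linarith

theorem sub_corner_le_two_smul (hx : x ∈ Icc 0 1) :
    x - (fun i => if i = j then -1 else 3) ≤ (2 : ℝ) • fun i => if i = j then 1 else -1 := by
  intro i
  have : x i ≤ 1 := hx.2 i
  simp only [Pi.sub_apply, Pi.smul_apply, smul_eq_mul]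
  split_ifs <;> linarith

end UnitCube

theorem stmt_5_general (n m : ℕ)
    (U : Set (Fin n → ℝ))
    (hUsub : Set.Icc (fun _ => (-1:ℝ)) (fun _ => (3:ℝ)) ⊆ U)
    (F : (Fin n → ℝ) → (Fin m → ℝ))
    (F' : (Fin n → ℝ) → Matrix (Fin m) (Fin n) ℝ)
    (hmono : ∀ z ∈ U, ∀ k j, 0 ≤ F' z k j)
    (hconv : ∀ z ∈ U, ∀ w ∈ U, (F' z).mulVec (w - z) ≤ F w - F z) :
    ∀ j : Fin n, ∀ x ∈ Set.Icc (0 : Fin n → ℝ) 1,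
      (1/2 : ℝ) • ((F' (fun i => if i = j then -1 else 3)).mulVec
          (fun i => if i = j then 1 else -3))
        ≤ (F' x).mulVec (fun i => if i = j then 1 else -1) := by
  intro j x hx
  set z : Fin n → ℝ := fun i => if i = j then -1 else 3
  have hzU : z ∈ U := hUsub ⟨fun i => by dsimp [z]; split_ifs <;> norm_num,
    fun i => by dsimp [z]; split_ifs <;> norm_num⟩
  have hxU : x ∈ U := hUsub ⟨fun i => (neg_one_lt_zero.trans_le (hx.1 i)).le,
    fun i => (hx.2 i).trans (by norm_num)⟩
  have key : F' z *ᵥ (fun i => if i = j then 1 else -3)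
      ≤ (2 : ℝ) • F' x *ᵥ (fun i => if i = j then 1 else -1) :=
    calc F' z *ᵥ (fun i => if i = j then 1 else -3)
        ≤ F' z *ᵥ (x - z) :=
          (F' z).mulVec_mono_of_nonneg (hmono z hzU) (signed_unit_le_sub_corner j hx)
      _ ≤ F' x *ᵥ (x - z) := mulVec_sub_le_of_gradient_ineq F F' hconv hxU hzU
      _ ≤ F' x *ᵥ ((2 : ℝ) • fun i => if i = j then 1 else -1) :=
          (F' x).mulVec_mono_of_nonneg (hmono x hxU) (sub_corner_le_two_smul j hx)
      _ = (2 : ℝ) • F' x *ᵥ (fun i => if i = j then 1 else -1) := mulVec_smul _ _ _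
  intro k
  have := key k
  simp only [Pi.smul_apply, smul_eq_mul] at this ⊢
  linarith

theorem stmt_5 (n m : ℕ) (hn : 2 ≤ n) (hnm : n ≤ m)
    (U : Set (Fin n → ℝ)) (hUopen : IsOpen U) (hUconv : Convex ℝ U)
    (hUsub : Set.Icc (fun _ => (-1:ℝ)) (fun _ => (3:ℝ)) ⊆ U)
    (F : (Fin n → ℝ) → (Fin m → ℝ))
    (F' : (Fin n → ℝ) → Matrix (Fin m) (Fin n) ℝ)
    (hderiv : ∀ z ∈ U, HasFDerivAt F ((F' z).mulVecLin.toContinuousLinearMap) z)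
    (hmono : ∀ z ∈ U, ∀ k j, 0 ≤ F' z k j)
    (hconv : ∀ z ∈ U, ∀ w ∈ U, (F' z).mulVec (w - z) ≤ F w - F z) :
    ∀ j : Fin n, ∀ x ∈ Set.Icc (0 : Fin n → ℝ) 1,
      (1/2 : ℝ) • ((F' (fun i => if i = j then -1 else 3)).mulVec
          (fun i => if i = j then 1 else -3))
        ≤ (F' x).mulVec (fun i => if i = j then 1 else -1) :=
  stmt_5_general n m U hUsub F F' hmono hconv
end

section
/- Let F : U ⊆ ℝⁿ → ℝⁿ, n ≥ 2, be monotonic and convex on a convex open set U ⊇ [−2, n(n+3)]ⁿ. Then for every j ∈ {1,…,n} and x ∈ [−1,n]ⁿ, with z⁽ʲ⁾ := −2eⱼ + n(n+3)eⱼ' and d⁽ʲ⁾ := eⱼ − (n²+3n+1)eⱼ', one has F'(x)(eⱼ − n eⱼ') ≥ (1/(n+2)) F'(z⁽ʲ⁾) d⁽ʲ⁾ entrywise. -/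
open Matrix Set

/-!
Convexity at `z` and at `x` gives `F'(z)(x − z) ≤ F x − F z ≤ F'(x)(x − z)`, so the Jacobian is
monotone along the segment. Since all Jacobians are entrywise nonnegative, bounding `x − z` below
by `d` and above by `(n + 2)(eⱼ − n eⱼ')` turns this into
`F'(z) d ≤ F'(z)(x − z) ≤ F'(x)(x − z) ≤ (n + 2) F'(x)(eⱼ − n eⱼ')`.
-/

theorem Matrix.mulVec_mono_of_nonneg_s14 {m ι R : Type*} [Fintype ι] [Semiring R] [PartialOrder R]
    [IsOrderedRing R] {M : Matrix m ι R} (hM : ∀ i j, 0 ≤ M i j) {u v : ι → R} (huv : u ≤ v) :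
    M *ᵥ u ≤ M *ᵥ v :=
  fun i => dotProduct_le_dotProduct_of_nonneg_left huv fun j => hM i j

section Convex

variable {ι R : Type*} [Fintype ι] [CommRing R] [PartialOrder R] [IsOrderedRing R]
  {U : Set (ι → R)} {F : (ι → R) → ι → R} {F' : (ι → R) → Matrix ι ι R} {x z : ι → R}

theorem mulVec_sub_le_mulVec_sub_of_convex
    (hconv : ∀ z ∈ U, ∀ w ∈ U, F' z *ᵥ (w - z) ≤ F w - F z) (hz : z ∈ U) (hx : x ∈ U) :
    F' z *ᵥ (x - z) ≤ F' x *ᵥ (x - z) :=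
  calc F' z *ᵥ (x - z) ≤ F x - F z := hconv z hz x hx
    _ = -(F z - F x) := (neg_sub _ _).symm
    _ ≤ -(F' x *ᵥ (z - x)) := neg_le_neg (hconv x hx z hz)
    _ = F' x *ᵥ (x - z) := by rw [← mulVec_neg, neg_sub]

theorem mulVec_le_smul_mulVec_of_convex
    (hconv : ∀ z ∈ U, ∀ w ∈ U, F' z *ᵥ (w - z) ≤ F w - F z)
    (hmono : ∀ z ∈ U, ∀ k j, 0 ≤ F' z k j) (hz : z ∈ U) (hx : x ∈ U) {d w : ι → R} {c : R}
    (hd : d ≤ x - z) (hw : x - z ≤ c • w) :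
    F' z *ᵥ d ≤ c • F' x *ᵥ w :=
  calc F' z *ᵥ d ≤ F' z *ᵥ (x - z) := mulVec_mono_of_nonneg_s14 (hmono z hz) hd
    _ ≤ F' x *ᵥ (x - z) := mulVec_sub_le_mulVec_sub_of_convex hconv hz hx
    _ ≤ F' x *ᵥ (c • w) := mulVec_mono_of_nonneg_s14 (hmono x hx) hw
    _ = c • F' x *ᵥ w := mulVec_smul _ _ _

end Convex

section Corner

variable {ι : Type*} {m : ℝ}

theorem Icc_neg_one_subset_Icc_neg_two (hm : 0 ≤ m) :
    Icc (fun _ : ι => (-1 : ℝ)) (fun _ => m) ⊆ Icc (fun _ => -2) (fun _ => m * (m + 3)) :=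
  Icc_subset_Icc (fun _ => by norm_num) (fun _ => by dsimp only; nlinarith)

variable [DecidableEq ι]

theorem corner_mem_Icc (hm : 0 ≤ m) (j : ι) :
    (fun i => if i = j then -2 else m * (m + 3)) ∈ Icc (fun _ => (-2 : ℝ)) (fun _ => m * (m + 3)) :=
  ⟨fun i => by dsimp only; split_ifs <;> nlinarith, fun i => by dsimp only; split_ifs <;> nlinarith⟩

theorem le_sub_corner {x : ι → ℝ} (hx : (fun _ => -1) ≤ x) (j : ι) :
    (fun i => if i = j then 1 else -(m ^ 2 + 3 * m + 1))
      ≤ x - fun i => if i = j then -2 else m * (m + 3) := by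
  intro i
  have := hx i
  simp only [Pi.sub_apply] at this ⊢
  split_ifs <;> nlinarith

theorem sub_corner_le {x : ι → ℝ} (hx : x ≤ fun _ => m) (j : ι) :
    x - (fun i => if i = j then -2 else m * (m + 3))
      ≤ (m + 2) • fun i => if i = j then 1 else -m := by
  intro i
  have := hx i
  simp only [Pi.sub_apply, Pi.smul_apply, smul_eq_mul] at this ⊢
  split_ifs <;> nlinarith

end Corner

theorem stmt_14_general (n : ℕ)
    (U : Set (Fin n → ℝ))
    (hUsub : Set.Icc (fun _ => (-2:ℝ)) (fun _ => (n:ℝ) * ((n:ℝ) + 3)) ⊆ U)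
    (F : (Fin n → ℝ) → (Fin n → ℝ))
    (F' : (Fin n → ℝ) → Matrix (Fin n) (Fin n) ℝ)
    (hmono : ∀ z ∈ U, ∀ k j, 0 ≤ F' z k j)
    (hconv : ∀ z ∈ U, ∀ w ∈ U, (F' z).mulVec (w - z) ≤ F w - F z) :
    ∀ j : Fin n, ∀ x ∈ Set.Icc (fun _ => (-1:ℝ)) (fun _ => (n:ℝ)),
      ((n:ℝ) + 2)⁻¹ •
        ((F' (fun i => if i = j then -2 else (n:ℝ) * ((n:ℝ) + 3))).mulVec
          (fun i => if i = j then 1 else -((n:ℝ)^2 + 3 * n + 1)))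
      ≤ (F' x).mulVec (fun i => if i = j then 1 else -(n:ℝ)) := by
  intro j x hx
  have hn : (0 : ℝ) ≤ n := n.cast_nonneg
  rw [inv_smul_le_iff_of_pos (by positivity)]
  exact mulVec_le_smul_mulVec_of_convex hconv hmono (hUsub (corner_mem_Icc hn j))
    (hUsub (Icc_neg_one_subset_Icc_neg_two hn hx)) (le_sub_corner hx.1 j) (sub_corner_le hx.2 j)

theorem stmt_14 (n : ℕ) (hn : 2 ≤ n)
    (U : Set (Fin n → ℝ)) (hUopen : IsOpen U) (hUconv : Convex ℝ U)
    (hUsub : Set.Icc (fun _ => (-2:ℝ)) (fun _ => (n:ℝ) * ((n:ℝ) + 3)) ⊆ U)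
    (F : (Fin n → ℝ) → (Fin n → ℝ))
    (F' : (Fin n → ℝ) → Matrix (Fin n) (Fin n) ℝ)
    (hderiv : ∀ z ∈ U, HasFDerivAt F ((F' z).mulVecLin.toContinuousLinearMap) z)
    (hmono : ∀ z ∈ U, ∀ k j, 0 ≤ F' z k j)
    (hconv : ∀ z ∈ U, ∀ w ∈ U, (F' z).mulVec (w - z) ≤ F w - F z) :
    ∀ j : Fin n, ∀ x ∈ Set.Icc (fun _ => (-1:ℝ)) (fun _ => (n:ℝ)),
      ((n:ℝ) + 2)⁻¹ •
        ((F' (fun i => if i = j then -2 else (n:ℝ) * ((n:ℝ) + 3))).mulVec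
          (fun i => if i = j then 1 else -((n:ℝ)^2 + 3 * n + 1)))
      ≤ (F' x).mulVec (fun i => if i = j then 1 else -(n:ℝ)) :=
  stmt_14_general n U hUsub F F' hmono hconv
end
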